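/- arXiv:1804.02465 — 5 statements merged into one kernel-verified Lean document; each statement's English description precedes it below -/
import Mathlib

section
/- Let s be the optimal solution to min_{s} ½‖s−z‖₂² subject to 0 ≤ s_m ≤ 1 for all m and Σ_m s_m = N. If indices i, j satisfy z_i > z_j and s_i = 0, then s_j = 0. -/
/-!
Exchanging the entries `s i` and `s j` of a feasible point keeps it feasible, and changes the
objective `∑ (s m - z m) ^ 2` by `-2 (s j - s i) (z i - z j)`. So at the minimiser, `z j < z i`
forces `s j ≤ s i`: the projection is order-preserving, and `s i = 0` gives `s j = 0`.
-/

open Finset Equiv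

variable {ι : Type*} [Fintype ι] [DecidableEq ι]

theorem sum_sq_sub_comp_swap (s z : ι → ℝ) (i j : ι) :
    ∑ m, (s (swap i j m) - z m) ^ 2 = ∑ m, (s m - z m) ^ 2 - 2 * (s j - s i) * (z i - z j) := by
  rcases eq_or_ne i j with rfl | hij
  · simp
  have hdiff : ∑ m, ((s (swap i j m) - z m) ^ 2 - (s m - z m) ^ 2) =
      ((s j - z i) ^ 2 - (s i - z i) ^ 2) + ((s i - z j) ^ 2 - (s j - z j) ^ 2) := by
    rw [Fintype.sum_eq_add i j hij fun m hm => by rw [swap_apply_of_ne_of_ne hm.1 hm.2, sub_self],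
      swap_apply_left, swap_apply_right]
  rw [sum_sub_distrib] at hdiff
  linarith

theorem le_of_sum_sq_sub_le_comp_swap {s z : ι → ℝ} {i j : ι}
    (hmin : ∑ m, (s m - z m) ^ 2 ≤ ∑ m, (s (swap i j m) - z m) ^ 2) (hij : z j < z i) :
    s j ≤ s i := by
  rw [sum_sq_sub_comp_swap] at hmin
  by_contra! hlt
  linarith [mul_pos (sub_pos.2 hlt) (sub_pos.2 hij)]

theorem stmt_2_general {M N : ℕ} (z s : Fin M → ℝ)
    (hs : ∀ m, 0 ≤ s m ∧ s m ≤ 1) (hsN : ∑ m, s m = N)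
    (hmin : ∀ t : Fin M → ℝ, (∀ m, 0 ≤ t m ∧ t m ≤ 1) → ∑ m, t m = N →
      ∑ m, (s m - z m) ^ 2 ≤ ∑ m, (t m - z m) ^ 2)
    (i j : Fin M) (hij : z j < z i) (hsi : s i = 0) :
    s j = 0 := by
  have hswap := hmin (s ∘ swap i j) (fun m => hs _) (by rw [← hsN]; exact Equiv.sum_comp (swap i j) s)
  have hle : s j ≤ s i := le_of_sum_sq_sub_le_comp_swap hswap hij
  exact le_antisymm (hsi ▸ hle) (hs j).1

theorem stmt_2 {M N : ℕ} (hN : 0 < N) (hNM : N ≤ M) (z s : Fin M → ℝ)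
    (hs : ∀ m, 0 ≤ s m ∧ s m ≤ 1) (hsN : ∑ m, s m = N)
    (hmin : ∀ t : Fin M → ℝ, (∀ m, 0 ≤ t m ∧ t m ≤ 1) → ∑ m, t m = N →
      ∑ m, (s m - z m) ^ 2 ≤ ∑ m, (t m - z m) ^ 2)
    (i j : Fin M) (hij : z j < z i) (hsi : s i = 0) :
    s j = 0 :=
  stmt_2_general z s hs hsN hmin i j hij hsi
end

section
/- Let z ∈ ℝ^M have entries in non-increasing order and suppose s, the projection of z onto S = {s ∈ [0,1]^M : Σ s_m = N}, has at least one entry strictly between 0 and 1. Then there is exactly one r ∈ {1,…,N} admitting ρ ≥ r and κ = (1/(ρ−r+1))(Σ_{m=r}^{ρ} z_m − (N−r+1)) satisfying 0 < z_r − κ < 1 and (if r ≥ 2) z_{r−1} − κ ≥ 1, such that s is given by s_m = 1 for m ≤ r−1, s_m = z_m − κ for r ≤ m ≤ ρ, and s_m = 0 for m > ρ. -/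
/-!
Moving a small mass `ε` from a coordinate `j` with `s j > 0` to a coordinate `i` with `s i < 1`
keeps `s` feasible and changes the squared distance to `z` by
`2ε((s i - z i) - (s j - z j)) + 2ε²`, so minimality forces `s j - z j ≤ s i - z i`. Comparing
every coordinate with a fractional one `m₀` shows that `s` is `z - κ` clamped to `[0, 1]`, with
`κ = z m₀ - s m₀`. As `z` is non-increasing, `s` is then `1` before the first coordinate `r` with
`s r < 1`, equal to `z - κ` up to the last positive coordinate `ρ`, and `0` afterwards; the
constraint `∑ s = N` determines `κ`, and any `r` with the stated profile is again the first
coordinate where `s` drops below `1`, hence unique.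
-/

open Finset

section Projection

variable {ι : Type*} [DecidableEq ι] {I : Finset ι} {c : ℝ} {s z : ι → ℝ}

theorem sub_le_sub_of_isMinOn_cappedSimplex
    (hs : ∀ m ∈ I, 0 ≤ s m ∧ s m ≤ 1) (hsum : ∑ m ∈ I, s m = c)
    (hmin : ∀ t : ι → ℝ, (∀ m ∈ I, 0 ≤ t m ∧ t m ≤ 1) → ∑ m ∈ I, t m = c →
      ∑ m ∈ I, (s m - z m) ^ 2 ≤ ∑ m ∈ I, (t m - z m) ^ 2)
    {i j : ι} (hi : i ∈ I) (hj : j ∈ I) (hsi : s i < 1) (hsj : 0 < s j) :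
    s j - z j ≤ s i - z i := by
  rcases eq_or_ne i j with rfl | hij
  · exact le_rfl
  have transfer : ∀ ε, 0 < ε → ε ≤ 1 - s i → ε ≤ s j → s j - z j ≤ s i - z i + ε := by
    intro ε hε hεi hεj
    set t : ι → ℝ := fun m => s m + (if m = i then ε else 0) - (if m = j then ε else 0)
    have hti : t i = s i + ε := by simp [t, hij]
    have htj : t j = s j - ε := by simp [t, hij.symm]
    have ht : ∀ m, m ≠ i → m ≠ j → t m = s m := by intro m hmi hmj; simp [t, hmi, hmj]
    have hfeas : ∀ m ∈ I, 0 ≤ t m ∧ t m ≤ 1 := by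
      intro m hm
      by_cases hmi : m = i
      · subst hmi; rw [hti]; constructor <;> linarith [hs m hm]
      by_cases hmj : m = j
      · subst hmj; rw [htj]; constructor <;> linarith [hs m hm]
      rw [ht m hmi hmj]; exact hs m hm
    have htsum : ∑ m ∈ I, t m = c := by
      simp only [t, sum_sub_distrib, sum_add_distrib, sum_ite_eq', if_pos hi, if_pos hj]
      linarith
    have hcost : ∑ m ∈ I, ((t m - z m) ^ 2 - (s m - z m) ^ 2)
        = ((t i - z i) ^ 2 - (s i - z i) ^ 2) + ((t j - z j) ^ 2 - (s j - z j) ^ 2) :=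
      sum_eq_add_of_mem i j hi hj hij fun m _ hm => by rw [ht m hm.1 hm.2, sub_self]
    have := hmin t hfeas htsum
    rw [← sub_nonneg, ← sum_sub_distrib, hcost, hti, htj] at this
    nlinarith
  by_contra! hlt
  set ε := min ((s j - z j - (s i - z i)) / 2) (min (1 - s i) (s j))
  have hε : 0 < ε := lt_min (by linarith) (lt_min (by linarith) hsj)
  have hεδ : ε ≤ (s j - z j - (s i - z i)) / 2 := min_le_left _ _
  have := transfer ε hε (min_le_of_right_le (min_le_left _ _))
    (min_le_of_right_le (min_le_right _ _))
  linarith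

theorem eq_clamp_of_isMinOn_cappedSimplex
    (hs : ∀ m ∈ I, 0 ≤ s m ∧ s m ≤ 1) (hsum : ∑ m ∈ I, s m = c)
    (hmin : ∀ t : ι → ℝ, (∀ m ∈ I, 0 ≤ t m ∧ t m ≤ 1) → ∑ m ∈ I, t m = c →
      ∑ m ∈ I, (s m - z m) ^ 2 ≤ ∑ m ∈ I, (t m - z m) ^ 2)
    {m₀ : ι} (hm₀ : m₀ ∈ I) (h0 : 0 < s m₀) (h1 : s m₀ < 1) :
    ∀ m ∈ I, s m = max 0 (min 1 (z m - (z m₀ - s m₀))) := by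
  intro m hm
  have exch : ∀ {i j}, i ∈ I → j ∈ I → s i < 1 → 0 < s j → s j - z j ≤ s i - z i :=
    fun hi hj => sub_le_sub_of_isMinOn_cappedSimplex hs hsum hmin hi hj
  obtain ⟨hm0, hm1⟩ := hs m hm
  rcases hm0.eq_or_lt with hzero | hpos
  · have := exch hm hm₀ (by linarith) h0
    rw [← hzero] at this ⊢
    simp only [zero_sub] at this
    rw [min_eq_right (by linarith), max_eq_left (by linarith)]
  rcases hm1.eq_or_lt with hone | hlt
  · have := exch hm₀ hm h1 hpos
    rw [hone] at this ⊢
    rw [min_eq_left (by linarith), max_eq_right zero_le_one]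
  · have := exch hm hm₀ hlt h0
    have := exch hm₀ hm h1 hpos
    rw [min_eq_right (by linarith), max_eq_right (by linarith)]
    linarith

end Projection

def capProfile (z : ℕ → ℝ) (κ : ℝ) (r ρ m : ℕ) : ℝ :=
  if m ≤ r - 1 then 1 else if m ≤ ρ then z m - κ else 0

theorem sum_Icc_sub_const {r ρ : ℕ} (z : ℕ → ℝ) (κ : ℝ) (hrρ : r ≤ ρ + 1) :
    ∑ m ∈ Icc r ρ, (z m - κ) = ∑ m ∈ Icc r ρ, z m - ((ρ : ℝ) - r + 1) * κ := by
  rw [sum_sub_distrib, sum_const, Nat.card_Icc, nsmul_eq_mul, Nat.cast_sub hrρ]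
  push_cast
  ring

theorem sum_capProfile {M r ρ : ℕ} (z : ℕ → ℝ) (κ : ℝ) (hr : 1 ≤ r) (hrρ : r ≤ ρ + 1)
    (hρM : ρ ≤ M) :
    ∑ m ∈ Icc 1 M, capProfile z κ r ρ m = ((r : ℝ) - 1) + ∑ m ∈ Icc r ρ, (z m - κ) := by
  obtain ⟨k, rfl⟩ : ∃ k, r = k + 1 := ⟨r - 1, by omega⟩
  have hIcc : Icc 1 M = Ioc 0 M := Icc_add_one_left_eq_Ioc 0 M
  rw [hIcc, Icc_add_one_left_eq_Ioc,
    ← sum_Ioc_consecutive _ (Nat.zero_le ρ) hρM, ← sum_Ioc_consecutive _ (Nat.zero_le k) (by omega)]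
  have hones : ∑ m ∈ Ioc 0 k, capProfile z κ (k + 1) ρ m = k :=
    (sum_congr rfl fun m hm => if_pos (by simp only [mem_Ioc] at hm; omega)).trans (by simp)
  have hmid : ∑ m ∈ Ioc k ρ, capProfile z κ (k + 1) ρ m = ∑ m ∈ Ioc k ρ, (z m - κ) :=
    sum_congr rfl fun m hm => by
      simp only [mem_Ioc] at hm
      rw [capProfile, if_neg (by omega), if_pos hm.2]
  have hzeros : ∑ m ∈ Ioc ρ M, capProfile z κ (k + 1) ρ m = 0 :=
    sum_eq_zero fun m hm => by
      simp only [mem_Ioc] at hm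
      rw [capProfile, if_neg (by omega), if_neg (by omega)]
  rw [hones, hmid, hzeros]
  push_cast
  ring

theorem isLeast_of_eq_capProfile {M r ρ : ℕ} {z s : ℕ → ℝ} {κ : ℝ} (hr : 1 ≤ r)
    (hrρ : r ≤ ρ) (hρM : ρ ≤ M) (hzr : z r - κ < 1)
    (hs : ∀ m ∈ Icc 1 M, s m = capProfile z κ r ρ m) :
    IsLeast {m | m ∈ Icc 1 M ∧ s m < 1} r := by
  have hrM : r ∈ Icc 1 M := mem_Icc.2 ⟨hr, hrρ.trans hρM⟩
  refine ⟨⟨hrM, ?_⟩, fun m ⟨hm, hsm⟩ => ?_⟩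
  · rwa [hs r hrM, capProfile, if_neg (by omega), if_pos hrρ]
  · by_contra! hmr
    rw [hs m hm, capProfile, if_pos (by omega)] at hsm
    exact hsm.false

section Sorted

variable {M r ρ : ℕ} {z s : ℕ → ℝ} {κ : ℝ}

theorem one_le_sub_of_lt_isLeast (hclamp : ∀ m ∈ Icc 1 M, s m = max 0 (min 1 (z m - κ)))
    (hr : IsLeast {m | m ∈ Icc 1 M ∧ s m < 1} r) {m : ℕ} (hm : m ∈ Icc 1 M) (hmr : m < r) :
    1 ≤ z m - κ := by
  have : ¬ s m < 1 := fun h => (hmr.trans_le (hr.2 ⟨hm, h⟩)).false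
  rw [hclamp m hm] at this
  simpa using this

theorem sub_nonpos_of_isGreatest_lt (hclamp : ∀ m ∈ Icc 1 M, s m = max 0 (min 1 (z m - κ)))
    (hρ : IsGreatest {m | m ∈ Icc 1 M ∧ 0 < s m} ρ) {m : ℕ} (hm : m ∈ Icc 1 M) (hρm : ρ < m) :
    z m - κ ≤ 0 := by
  have : ¬ 0 < s m := fun h => (hρm.trans_le (hρ.2 ⟨hm, h⟩)).false
  rw [hclamp m hm] at this
  simpa using this

theorem sub_mem_Ioo_of_eq_clamp (hsort : ∀ i ∈ Icc 1 M, ∀ j ∈ Icc 1 M, i ≤ j → z j ≤ z i)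
    (hclamp : ∀ m ∈ Icc 1 M, s m = max 0 (min 1 (z m - κ)))
    (hr : IsLeast {m | m ∈ Icc 1 M ∧ s m < 1} r)
    (hρ : IsGreatest {m | m ∈ Icc 1 M ∧ 0 < s m} ρ) {m : ℕ} (hm : m ∈ Icc r ρ) :
    0 < z m - κ ∧ z m - κ < 1 := by
  obtain ⟨⟨hrM, hsr⟩, -⟩ := hr
  obtain ⟨⟨hρM, hsρ⟩, -⟩ := hρ
  have hmM : m ∈ Icc 1 M := by simp only [mem_Icc] at hm hrM hρM ⊢; omega
  rw [hclamp r hrM] at hsr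
  rw [hclamp ρ hρM] at hsρ
  have hzr := hsort r hrM m hmM (mem_Icc.1 hm).1
  have hzρ := hsort m hmM ρ hρM (mem_Icc.1 hm).2
  simp only [max_lt_iff, min_lt_iff, lt_max_iff, lt_min_iff] at hsr hsρ
  constructor
  · linarith [hsρ.resolve_left (lt_irrefl 0)]
  · linarith [hsr.2.resolve_left (lt_irrefl 1)]

theorem eq_capProfile_of_eq_clamp (hsort : ∀ i ∈ Icc 1 M, ∀ j ∈ Icc 1 M, i ≤ j → z j ≤ z i)
    (hclamp : ∀ m ∈ Icc 1 M, s m = max 0 (min 1 (z m - κ)))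
    (hr : IsLeast {m | m ∈ Icc 1 M ∧ s m < 1} r)
    (hρ : IsGreatest {m | m ∈ Icc 1 M ∧ 0 < s m} ρ) :
    ∀ m ∈ Icc 1 M, s m = capProfile z κ r ρ m := by
  intro m hm
  have hm1 := (mem_Icc.1 hm).1
  rw [hclamp m hm, capProfile]
  split_ifs with hmr hmρ
  · rw [min_eq_left (one_le_sub_of_lt_isLeast hclamp hr hm (by omega)), max_eq_right zero_le_one]
  · obtain ⟨h0, h1⟩ := sub_mem_Ioo_of_eq_clamp hsort hclamp hr hρ (mem_Icc.2 ⟨by omega, hmρ⟩)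
    rw [min_eq_right h1.le, max_eq_right h0.le]
  · have := sub_nonpos_of_isGreatest_lt hclamp hρ hm (by omega)
    rw [min_eq_right (by linarith), max_eq_left this]

end Sorted

open Finset in
theorem stmt_5_general {M N : ℕ} (z s : ℕ → ℝ)
    (hsort : ∀ i ∈ Icc 1 M, ∀ j ∈ Icc 1 M, i ≤ j → z j ≤ z i)
    (hs : ∀ m ∈ Icc 1 M, 0 ≤ s m ∧ s m ≤ 1)
    (hsN : ∑ m ∈ Icc 1 M, s m = N)
    (hmin : ∀ t : ℕ → ℝ, (∀ m ∈ Icc 1 M, 0 ≤ t m ∧ t m ≤ 1) →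
      (∑ m ∈ Icc 1 M, t m = N) →
      ∑ m ∈ Icc 1 M, (s m - z m) ^ 2 ≤ ∑ m ∈ Icc 1 M, (t m - z m) ^ 2)
    (hfrac : ∃ m ∈ Icc 1 M, 0 < s m ∧ s m < 1) :
    ∃! r : ℕ, r ∈ Icc 1 N ∧
      ∃ ρ ∈ Icc r M,
        ∃ κ : ℝ,
          κ = ((∑ m ∈ Icc r ρ, z m) - ((N : ℝ) - r + 1)) / ((ρ : ℝ) - r + 1) ∧
          (0 < z r - κ ∧ z r - κ < 1) ∧
          (2 ≤ r → 1 ≤ z (r - 1) - κ) ∧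
          (∀ m ∈ Icc 1 M,
            s m = if m ≤ r - 1 then 1 else if m ≤ ρ then z m - κ else 0) := by
  obtain ⟨m₀, hm₀, h0, h1⟩ := hfrac
  set κ := z m₀ - s m₀
  have hclamp := eq_clamp_of_isMinOn_cappedSimplex hs hsN hmin hm₀ h0 h1
  obtain ⟨r, hr⟩ : ∃ r, IsLeast {m | m ∈ Icc 1 M ∧ s m < 1} r :=
    BddBelow.exists_isLeast_of_nonempty (OrderBot.bddBelow _) ⟨m₀, hm₀, h1⟩
  obtain ⟨ρ, hρ⟩ : ∃ ρ, IsGreatest {m | m ∈ Icc 1 M ∧ 0 < s m} ρ :=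
    BddAbove.exists_isGreatest_of_nonempty ⟨M, fun m hm => (mem_Icc.1 hm.1).2⟩ ⟨m₀, hm₀, h0⟩
  have hrρ : r ≤ ρ := (hr.2 ⟨hm₀, h1⟩).trans (hρ.2 ⟨hm₀, h0⟩)
  obtain ⟨hr1, -⟩ := mem_Icc.1 hr.1.1
  have hρM := (mem_Icc.1 hρ.1.1).2
  have hprofile := eq_capProfile_of_eq_clamp hsort hclamp hr hρ
  have hmid := fun m (hm : m ∈ Icc r ρ) => sub_mem_Ioo_of_eq_clamp hsort hclamp hr hρ hm
  have hsum : (N : ℝ) = (r - 1) + ∑ m ∈ Icc r ρ, (z m - κ) := by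
    rw [← hsN, sum_congr rfl hprofile, sum_capProfile z κ hr1 (by omega) hρM]
  have hpos : 0 < ∑ m ∈ Icc r ρ, (z m - κ) :=
    sum_pos (fun m hm => (hmid m hm).1) ⟨r, mem_Icc.2 ⟨le_rfl, hrρ⟩⟩
  have hden : (0 : ℝ) < ρ - r + 1 := by linarith [(Nat.cast_le (α := ℝ)).2 hrρ]
  refine ⟨r, ⟨mem_Icc.2 ⟨hr1, ?_⟩, ρ, mem_Icc.2 ⟨hrρ, hρM⟩, κ, ?_,
    hmid r (mem_Icc.2 ⟨le_rfl, hrρ⟩), fun h2r => ?_, hprofile⟩, ?_⟩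
  · exact Nat.lt_add_one_iff.1 (by exact_mod_cast (show (r : ℝ) < N + 1 by linarith))
  · rw [eq_div_iff hden.ne']
    linarith [sum_Icc_sub_const z κ (by omega : r ≤ ρ + 1)]
  · exact one_le_sub_of_lt_isLeast hclamp hr (mem_Icc.2 ⟨by omega, by omega⟩) (by omega)
  · rintro r' ⟨hr', ρ', hρ', κ', -, ⟨-, hzr'⟩, -, hs'⟩
    exact (isLeast_of_eq_capProfile (mem_Icc.1 hr').1 (mem_Icc.1 hρ').1 (mem_Icc.1 hρ').2 hzr'
      hs').unique hr

open Finset in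
theorem stmt_5 {M N : ℕ} (hN : 0 < N) (hNM : N ≤ M) (z s : ℕ → ℝ)
    (hsort : ∀ i ∈ Icc 1 M, ∀ j ∈ Icc 1 M, i ≤ j → z j ≤ z i)
    (hs : ∀ m ∈ Icc 1 M, 0 ≤ s m ∧ s m ≤ 1)
    (hsN : ∑ m ∈ Icc 1 M, s m = N)
    (hmin : ∀ t : ℕ → ℝ, (∀ m ∈ Icc 1 M, 0 ≤ t m ∧ t m ≤ 1) →
      (∑ m ∈ Icc 1 M, t m = N) →
      ∑ m ∈ Icc 1 M, (s m - z m) ^ 2 ≤ ∑ m ∈ Icc 1 M, (t m - z m) ^ 2)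
    (hfrac : ∃ m ∈ Icc 1 M, 0 < s m ∧ s m < 1) :
    ∃! r : ℕ, r ∈ Icc 1 N ∧
      ∃ ρ ∈ Icc r M,
        ∃ κ : ℝ,
          κ = ((∑ m ∈ Icc r ρ, z m) - ((N : ℝ) - r + 1)) / ((ρ : ℝ) - r + 1) ∧
          (0 < z r - κ ∧ z r - κ < 1) ∧
          (2 ≤ r → 1 ≤ z (r - 1) - κ) ∧
          (∀ m ∈ Icc 1 M,
            s m = if m ≤ r - 1 then 1 else if m ≤ ρ then z m - κ else 0) :=
  stmt_5_general z s hsort hs hsN hmin hfrac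
end

section
/- Fix a binary vector x ∈ {0,1}^M with exactly N ones, and let S = {z ∈ [0,1]^M : Σ z_m = N}. Then the set H = { (z−x)/‖z−x‖₁ : z ∈ S, z ≠ x } is convex. -/
/-!
With `ε i = 1 - 2 * x i ∈ {1, -1}`, every `z ∈ [0,1]^M` satisfies `|z i - x i| = ε i * (z i - x i)`,
so on the differences `z - x` the `ℓ₁` norm is the linear functional `∑ i, ε i * _`. Hence the set of
normalized differences is cut out by linear conditions: `∑ h = 0`, `0 ≤ ε i * h i` and
`∑ ε i * h i = 1` (conversely such an `h` has `|h i| ≤ 1` with the right sign, so `x + h ∈ [0,1]^M`),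
and a set given by linear equations and inequalities is convex.
-/

open Finset

lemma abs_sub_eq_sign_mul_of_mem_Icc {x z : ℝ} (hx : x = 0 ∨ x = 1) (hz : z ∈ Set.Icc 0 1) :
    |z - x| = (1 - 2 * x) * (z - x) := by
  rcases hx with rfl | rfl
  · rw [sub_zero, abs_of_nonneg hz.1]; ring
  · rw [abs_of_nonpos (by linarith [hz.2])]; ring

lemma abs_eq_sign_mul_of_nonneg {x h : ℝ} (hx : x = 0 ∨ x = 1) (hh : 0 ≤ (1 - 2 * x) * h) :
    |h| = (1 - 2 * x) * h := by
  rcases hx with rfl | rfl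
  · rw [abs_of_nonneg (by linarith)]; ring
  · rw [abs_of_nonpos (by linarith)]; ring

lemma add_mem_Icc_of_sign_mul_nonneg {x h : ℝ} (hx : x = 0 ∨ x = 1)
    (hh : 0 ≤ (1 - 2 * x) * h) (h_le : |h| ≤ 1) : x + h ∈ Set.Icc 0 1 := by
  have := abs_le.1 h_le
  rcases hx with rfl | rfl <;> constructor <;> linarith

section

variable {ι : Type*} [Fintype ι]

lemma convex_setOf_sum_eq_zero_signed {ε : ι → ℝ} :
    Convex ℝ {h : ι → ℝ | ∑ i, h i = 0 ∧ (∀ i, 0 ≤ ε i * h i) ∧ ∑ i, ε i * h i = 1} := by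
  rintro h ⟨h_sum, h_sign, h_norm⟩ k ⟨k_sum, k_sign, k_norm⟩ a b ha hb hab
  have hmix : ∀ i, ε i * (a • h + b • k) i = a * (ε i * h i) + b * (ε i * k i) := fun i => by
    simp only [Pi.add_apply, Pi.smul_apply, smul_eq_mul]; ring
  refine ⟨?_, fun i => ?_, ?_⟩
  · simp only [Pi.add_apply, Pi.smul_apply, smul_eq_mul, sum_add_distrib, ← mul_sum, h_sum,
      k_sum]
    ring
  · rw [hmix]
    exact add_nonneg (mul_nonneg ha (h_sign i)) (mul_nonneg hb (k_sign i))
  · simp only [hmix, sum_add_distrib, ← mul_sum, h_norm, k_norm]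
    linarith

variable {x : ι → ℝ}

lemma sum_abs_sub_pos {z : ι → ℝ} (hne : z ≠ x) : 0 < ∑ i, |z i - x i| := by
  obtain ⟨i, hi⟩ := Function.ne_iff.1 hne
  exact (abs_pos.2 (sub_ne_zero.2 hi)).trans_le
    (single_le_sum (f := fun i => |z i - x i|) (fun _ _ => abs_nonneg _) (mem_univ i))

lemma setOf_normalized_sub_eq (hx : ∀ i, x i = 0 ∨ x i = 1) :
    {h : ι → ℝ | ∃ z : ι → ℝ, (∀ i, 0 ≤ z i ∧ z i ≤ 1) ∧ ∑ i, z i = ∑ i, x i ∧ z ≠ x ∧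
        h = (∑ i, |z i - x i|)⁻¹ • (z - x)} =
      {h | ∑ i, h i = 0 ∧ (∀ i, 0 ≤ (1 - 2 * x i) * h i) ∧ ∑ i, (1 - 2 * x i) * h i = 1} := by
  ext h
  constructor
  · rintro ⟨z, hz, hsum, hne, rfl⟩
    have habs i : |z i - x i| = (1 - 2 * x i) * (z i - x i) :=
      abs_sub_eq_sign_mul_of_mem_Icc (hx i) (hz i)
    have hpos := sum_abs_sub_pos hne
    refine ⟨?_, fun i => ?_, ?_⟩
    · simp [← mul_sum, sum_sub_distrib, hsum]
    · simp only [Pi.smul_apply, Pi.sub_apply, smul_eq_mul, mul_left_comm _ (_⁻¹), ← habs]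
      positivity
    · simp only [Pi.smul_apply, Pi.sub_apply, smul_eq_mul, mul_left_comm _ (_⁻¹), ← mul_sum,
        ← habs]
      exact inv_mul_cancel₀ hpos.ne'
  · rintro ⟨h_sum, h_sign, h_norm⟩
    have habs i : |h i| = (1 - 2 * x i) * h i := abs_eq_sign_mul_of_nonneg (hx i) (h_sign i)
    have h_l1 : ∑ i, |h i| = 1 := by simpa only [habs] using h_norm
    refine ⟨x + h, fun i => ?_, ?_, fun hxh => ?_, ?_⟩
    · refine add_mem_Icc_of_sign_mul_nonneg (hx i) (h_sign i) (h_l1 ▸ ?_)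
      exact single_le_sum (f := fun i => |h i|) (fun _ _ => abs_nonneg _) (mem_univ i)
    · simp [sum_add_distrib, h_sum]
    · have : h = 0 := by simpa using hxh
      simp [this] at h_norm
    · simp [h_l1]

end

theorem stmt_6 {M N : ℕ} (x : Fin M → ℝ)
    (hx : ∀ m, x m = 0 ∨ x m = 1)
    (hxN : ∑ m, x m = N) :
    Convex ℝ {h : Fin M → ℝ |
      ∃ z : Fin M → ℝ, (∀ m, 0 ≤ z m ∧ z m ≤ 1) ∧ (∑ m, z m = N) ∧ z ≠ x ∧
        h = (∑ m, |z m - x m|)⁻¹ • (z - x)} := by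
  rw [← hxN, setOf_normalized_sub_eq hx]
  exact convex_setOf_sum_eq_zero_signed
end

section
/- Let x ∈ {0,1}^M be binary with exactly N ones, and E = Σ_{y=0}^{M−1} B_y x xᵀ B_yᵀ. Then λ_E := min over ĥ in the set G = {ĥ : Σ ĥ_i = 0, ĥ_i ∈ [0,0.5] if x_i = 0, ĥ_i ∈ [−0.5,0] if x_i = 1, ‖ĥ‖₁ = 1} of ĥᵀEĥ is strictly positive. -/
/-!
Each `B_y x xᵀ B_yᵀ` contributes the square `((B_y x) ⬝ h)²` to `hᵀ E h`, so it suffices that the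
`y = 0` term is nonzero. Since `B_0 = 2 I` this term is `4 (x ⬝ h)²`, and the sign constraints of `G`
give `|h_i| = h_i - 2 x_i h_i` for every `i`; summing, `1 = ∑ h_i - 2 (x ⬝ h) = -2 (x ⬝ h)`.
Hence the `y = 0` term equals `1`.
-/

open Matrix

def Amat (M : ℕ) (y : Fin M) : Matrix (Fin M) (Fin M) ℝ :=
  fun i j => if (j : ℕ) = (i : ℕ) + (y : ℕ) then 1 else 0

def Bmat (M : ℕ) (y : Fin M) : Matrix (Fin M) (Fin M) ℝ :=
  Amat M y + (Amat M y)ᵀ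

def Emat (M : ℕ) (x : Fin M → ℝ) : Matrix (Fin M) (Fin M) ℝ :=
  ∑ y : Fin M, vecMulVec (Bmat M y *ᵥ x) (Bmat M y *ᵥ x)

def Gset (M : ℕ) (x : Fin M → ℝ) : Set (Fin M → ℝ) :=
  {h | (∑ i, h i = 0) ∧
    (∀ i, x i = 0 → 0 ≤ h i ∧ h i ≤ 1 / 2) ∧
    (∀ i, x i = 1 → -(1 / 2) ≤ h i ∧ h i ≤ 0) ∧
    (∑ i, |h i| = 1)}

lemma dotProduct_vecMulVec_self_mulVec {n R : Type*} [Fintype n] [CommRing R] (v w : n → R) :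
    w ⬝ᵥ (vecMulVec v v *ᵥ w) = (v ⬝ᵥ w) ^ 2 := by
  rw [vecMulVec_mulVec, op_smul_eq_smul, dotProduct_smul, dotProduct_comm w v,
    smul_eq_mul, sq]

lemma dotProduct_Emat_mulVec {M : ℕ} (x h : Fin M → ℝ) :
    h ⬝ᵥ (Emat M x *ᵥ h) = ∑ y, (Bmat M y *ᵥ x ⬝ᵥ h) ^ 2 := by
  simp only [Emat, sum_mulVec, dotProduct_sum, dotProduct_vecMulVec_self_mulVec]

lemma Amat_zero {M : ℕ} (hM : 0 < M) : Amat M ⟨0, hM⟩ = 1 := by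
  ext i j
  simp [Amat, one_apply, Fin.ext_iff, eq_comm]

lemma Bmat_zero_mulVec {M : ℕ} (hM : 0 < M) (x : Fin M → ℝ) : Bmat M ⟨0, hM⟩ *ᵥ x = 2 • x := by
  rw [Bmat, Amat_zero, transpose_one, add_mulVec, one_mulVec, two_smul]

lemma dotProduct_eq_neg_half_of_mem_Gset {M : ℕ} {x h : Fin M → ℝ}
    (hx : ∀ m, x m = 0 ∨ x m = 1) (hh : h ∈ Gset M x) : x ⬝ᵥ h = -(1 / 2) := by
  obtain ⟨hsum, h0, h1, hnorm⟩ := hh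
  have habs : ∀ i, |h i| = h i - 2 * (x i * h i) := by
    intro i
    rcases hx i with hi | hi
    · rw [hi, abs_of_nonneg (h0 i hi).1]
      ring
    · rw [hi, abs_of_nonpos (h1 i hi).2]
      ring
  simp only [habs, Finset.sum_sub_distrib, ← Finset.mul_sum, hsum] at hnorm
  rw [dotProduct]
  linarith

theorem stmt_15_general {M : ℕ} (x : Fin M → ℝ)
    (hx : ∀ m, x m = 0 ∨ x m = 1) :
    ∀ h ∈ Gset M x, 0 < h ⬝ᵥ (Emat M x *ᵥ h) := by
  intro h hh
  have hxh := dotProduct_eq_neg_half_of_mem_Gset hx hh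
  have hM : 0 < M := Nat.pos_of_ne_zero (by rintro rfl; norm_num [dotProduct] at hxh)
  rw [dotProduct_Emat_mulVec]
  refine Finset.sum_pos' (fun y _ => sq_nonneg _) ⟨⟨0, hM⟩, Finset.mem_univ _, ?_⟩
  rw [Bmat_zero_mulVec, smul_dotProduct, hxh]
  norm_num

theorem stmt_15 {M N : ℕ} (x : Fin M → ℝ)
    (hx : ∀ m, x m = 0 ∨ x m = 1)
    (hxN : ∑ m, x m = N) :
    ∀ h ∈ Gset M x, 0 < h ⬝ᵥ (Emat M x *ᵥ h) :=
  stmt_15_general x hx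
end

section
/- Let x, z ∈ ℝ^M, x ≠ z, and for y ∈ {0,…,M−1} let A_y(i,j) = 1 iff j−i = y and i ≤ j. Define f(z) = (1/(4MK²)) Σ_{y=0}^{M−1} (zᵀB_y z − xᵀB_y x)² with B_y = A_y + A_yᵀ. Then the gradient satisfies ‖∇f(z)‖₂² ≤ (16/K²) ‖z‖₂² f(z). -/
open Matrix

/-- The objective `f(z) = (1/(4MK²)) ∑_y (zᵀB_y z − xᵀB_y x)²`. -/
noncomputable def fObj (M : ℕ) (K : ℝ) (x z : Fin M → ℝ) : ℝ :=
  (1 / (4 * M * K ^ 2)) *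
    ∑ y : Fin M, (z ⬝ᵥ (Bmat M y *ᵥ z) - x ⬝ᵥ (Bmat M y *ᵥ x)) ^ 2

/-- The gradient `∇f(z) = (1/(MK²)) ∑_y B_y z (zᵀB_y z − xᵀB_y x)`. -/
noncomputable def gradf (M : ℕ) (K : ℝ) (x z : Fin M → ℝ) : Fin M → ℝ :=
  fun i => (1 / (M * K ^ 2)) *
    ∑ y : Fin M, (Bmat M y *ᵥ z) i * (z ⬝ᵥ (Bmat M y *ᵥ z) - x ⬝ᵥ (Bmat M y *ᵥ x))

/-!
Writing `∇f(z) = (1/(MK²)) ∑_y d_y B_y z` with `d_y = zᵀB_y z − xᵀB_y x`, Cauchy–Schwarz over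
the `M` summands gives `‖∇f(z)‖² ≤ (1/(M K⁴)) ∑_y d_y² ‖B_y z‖²`. Every row and every column of
`B_y` has absolute sum at most `2`, so by the Schur test `‖B_y z‖² ≤ 4 ‖z‖²`, and
`∑_y d_y² = 4MK² f(z)`.
-/

open Finset

theorem Matrix.sum_sq_mulVec_le_of_sum_abs_le {m n : Type*} [Fintype m] [Fintype n]
    (A : Matrix m n ℝ) {R C : ℝ} (hR₀ : 0 ≤ R) (hR : ∀ i, ∑ j, |A i j| ≤ R)
    (hC : ∀ j, ∑ i, |A i j| ≤ C) (v : n → ℝ) :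
    ∑ i, (A *ᵥ v) i ^ 2 ≤ R * C * ∑ j, v j ^ 2 := by
  have hrow : ∀ i, (A *ᵥ v) i ^ 2 ≤ R * ∑ j, |A i j| * v j ^ 2 := fun i =>
    calc (A *ᵥ v) i ^ 2 ≤ (∑ j, |A i j|) * ∑ j, |A i j| * v j ^ 2 :=
          sum_sq_le_sum_mul_sum_of_sq_le_mul _ (fun j _ => abs_nonneg _)
            (fun j _ => by positivity) (fun j _ => le_of_eq (by rw [mul_pow, ← sq_abs (A i j)]; ring))
      _ ≤ R * ∑ j, |A i j| * v j ^ 2 :=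
          mul_le_mul_of_nonneg_right (hR i) (sum_nonneg fun j _ => by positivity)
  calc ∑ i, (A *ᵥ v) i ^ 2 ≤ ∑ i, R * ∑ j, |A i j| * v j ^ 2 := sum_le_sum fun i _ => hrow i
    _ = R * ∑ j, (∑ i, |A i j|) * v j ^ 2 := by
        rw [← mul_sum, sum_comm]; simp only [sum_mul]
    _ ≤ R * ∑ j, C * v j ^ 2 := by
        gcongr with j
        exact hC j
    _ = R * C * ∑ j, v j ^ 2 := by rw [← mul_sum, mul_assoc]

theorem sum_sq_sum_le_card_mul {ι κ : Type*} [Fintype ι] (s : Finset κ) (a : ι → κ → ℝ) :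
    ∑ i, (∑ y ∈ s, a i y) ^ 2 ≤ #s * ∑ y ∈ s, ∑ i, a i y ^ 2 :=
  calc ∑ i, (∑ y ∈ s, a i y) ^ 2 ≤ ∑ i, #s * ∑ y ∈ s, a i y ^ 2 :=
        sum_le_sum fun i _ => sq_sum_le_card_mul_sum_sq
    _ = #s * ∑ y ∈ s, ∑ i, a i y ^ 2 := by rw [← mul_sum, sum_comm]

section Bmat

variable {M : ℕ} (y : Fin M)

theorem abs_Amat (i j : Fin M) : |Amat M y i j| = Amat M y i j := by
  unfold Amat; split_ifs <;> simp

theorem sum_abs_Amat_row_le (i : Fin M) : ∑ j, |Amat M y i j| ≤ 1 := by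
  simp only [abs_Amat]
  simp only [Amat, sum_boole, Nat.cast_le_one]
  exact card_le_one.2 fun j hj k hk => Fin.ext (by simp only [mem_filter] at hj hk; omega)

theorem sum_abs_Amat_col_le (j : Fin M) : ∑ i, |Amat M y i j| ≤ 1 := by
  simp only [abs_Amat]
  simp only [Amat, sum_boole, Nat.cast_le_one]
  exact card_le_one.2 fun i hi k hk => Fin.ext (by simp only [mem_filter] at hi hk; omega)

theorem sum_abs_Bmat_row_le (i : Fin M) : ∑ j, |Bmat M y i j| ≤ 2 :=
  calc ∑ j, |Bmat M y i j| ≤ ∑ j, (|Amat M y i j| + |Amat M y j i|) :=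
        sum_le_sum fun j _ => abs_add_le _ _
    _ ≤ 1 + 1 := by
        rw [sum_add_distrib]
        exact add_le_add (sum_abs_Amat_row_le y i) (sum_abs_Amat_col_le y i)
    _ = 2 := one_add_one_eq_two

theorem Bmat_symm (i j : Fin M) : Bmat M y i j = Bmat M y j i := by
  simp only [Bmat, Matrix.add_apply, transpose_apply, add_comm]

theorem sum_sq_Bmat_mulVec_le (z : Fin M → ℝ) :
    ∑ i, (Bmat M y *ᵥ z) i ^ 2 ≤ 4 * ∑ i, z i ^ 2 := by
  refine ((Bmat M y).sum_sq_mulVec_le_of_sum_abs_le (C := 2) zero_le_two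
    (sum_abs_Bmat_row_le y) (fun j => ?_) z).trans_eq (by norm_num)
  simpa only [Bmat_symm y _ j] using sum_abs_Bmat_row_le y j

end Bmat

theorem stmt_19_general {M : ℕ} (K : ℝ) (x z : Fin M → ℝ) :
    ∑ i, (gradf M K x z i) ^ 2 ≤
      (16 / K ^ 2) * (∑ i, (z i) ^ 2) * fObj M K x z := by
  set d : Fin M → ℝ := fun y => z ⬝ᵥ (Bmat M y *ᵥ z) - x ⬝ᵥ (Bmat M y *ᵥ x)
  set c : ℝ := 1 / (M * K ^ 2)
  have hconst : c ^ 2 * M * 4 = 16 / K ^ 2 * (1 / (4 * M * K ^ 2)) := by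
    rcases eq_or_ne (M : ℝ) 0 with hM | hM
    · simp [c, hM]
    rcases eq_or_ne K 0 with hK | hK
    · simp [c, hK]
    simp only [c]
    field_simp
    ring
  calc ∑ i, gradf M K x z i ^ 2 = c ^ 2 * ∑ i, (∑ y, (Bmat M y *ᵥ z) i * d y) ^ 2 := by
        rw [mul_sum]; exact sum_congr rfl fun i _ => by rw [gradf, mul_pow]
    _ ≤ c ^ 2 * (M * ∑ y, ∑ i, ((Bmat M y *ᵥ z) i * d y) ^ 2) := by
        gcongr
        simpa using sum_sq_sum_le_card_mul univ fun i y => (Bmat M y *ᵥ z) i * d y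
    _ = c ^ 2 * (M * ∑ y, d y ^ 2 * ∑ i, (Bmat M y *ᵥ z) i ^ 2) := by
        simp only [mul_pow, ← sum_mul, mul_comm (d _ ^ 2)]
    _ ≤ c ^ 2 * (M * ∑ y, d y ^ 2 * (4 * ∑ i, z i ^ 2)) := by
        gcongr with y
        exact sum_sq_Bmat_mulVec_le y z
    _ = (16 / K ^ 2) * (∑ i, z i ^ 2) * fObj M K x z := by
        have hf : fObj M K x z = 1 / (4 * M * K ^ 2) * ∑ y, d y ^ 2 := rfl
        rw [hf, ← sum_mul]
        linear_combination (∑ i, z i ^ 2) * (∑ y, d y ^ 2) * hconst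

theorem stmt_19 {M : ℕ} (K : ℝ) (hK : 0 < K) (x z : Fin M → ℝ) (hxz : x ≠ z) :
    ∑ i, (gradf M K x z i) ^ 2 ≤
      (16 / K ^ 2) * (∑ i, (z i) ^ 2) * fObj M K x z :=
  stmt_19_general K x z
end
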